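/- arXiv:2009.02981 — 9 statements merged into one kernel-verified Lean document; each statement's English description precedes it below -/
import Mathlib

section
/- Let G be a group acting on a set X, and let Y ⊆ X be a subset whose G-orbit is regular in X. Let H be a normal subgroup of G and set HY := ⋃_{h ∈ H} h·Y. Then: (i) the G-orbit of HY is regular in X; and (ii) the setwise stabiliser G_{HY} of HY in G equals the product set H·G_Y = {h·s : h ∈ H, s ∈ G_Y}, where G_Y denotes the setwise stabiliser of Y in G. -/
open Pointwise

/-- If the `G`-orbit of `Y ⊆ X` is regular and `H ⊴ G`, then the `G`-orbit of
`HY = ⋃_{h ∈ H} hY` is regular in `X`, and the setwise stabiliser of `HY` equals `H · G_Y`. -/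
theorem stmt_0 {G X : Type*} [Group G] [MulAction G X] (Y : Set X)
    (hreg : ∀ g : G, (g • Y ∩ Y).Nonempty → g • Y = Y)
    (H : Subgroup G) (hH : H.Normal) :
    (∀ g : G, (g • (⋃ h ∈ H, h • Y) ∩ ⋃ h ∈ H, h • Y).Nonempty →
        g • (⋃ h ∈ H, h • Y) = ⋃ h ∈ H, h • Y) ∧
    {g : G | g • (⋃ h ∈ H, h • Y) = ⋃ h ∈ H, h • Y} =
      {g : G | ∃ h ∈ H, ∃ s : G, s • Y = Y ∧ g = h * s} := by
  set T : Set X := ⋃ h ∈ H, h • Y with hT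
  have memT : ∀ x : X, x ∈ T ↔ ∃ h ∈ H, x ∈ h • Y := by
    intro x; simp [hT]
  have smulT : ∀ g : G, ∀ x : X, x ∈ g • T ↔ ∃ k ∈ H, x ∈ (g * k) • Y := by
    intro g x
    rw [Set.mem_smul_set_iff_inv_smul_mem, memT]
    constructor
    · rintro ⟨k, hk, hx⟩
      refine ⟨k, hk, ?_⟩
      rw [Set.mem_smul_set_iff_inv_smul_mem, mul_inv_rev, mul_smul]
      exact Set.mem_smul_set_iff_inv_smul_mem.mp hx
    · rintro ⟨k, hk, hx⟩
      refine ⟨k, hk, ?_⟩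
      rw [Set.mem_smul_set_iff_inv_smul_mem, mul_inv_rev, mul_smul] at hx
      exact Set.mem_smul_set_iff_inv_smul_mem.mpr hx
  -- key: elements of the form h*s with h ∈ H, s ∈ G_Y stabilise T
  have key : ∀ h ∈ H, ∀ s : G, s • Y = Y → (h * s) • T = T := by
    intro h hh s hs
    ext x
    rw [smulT, memT]
    constructor
    · rintro ⟨k, hk, hx⟩
      refine ⟨h * (s * k * s⁻¹), H.mul_mem hh (hH.conj_mem k hk s), ?_⟩
      have : (h * (s * k * s⁻¹)) • Y = (h * s * k) • Y := by
        have : (h * (s * k * s⁻¹)) • Y = (h * (s * k * s⁻¹)) • (s • Y) := by rw [hs]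
        rw [this, smul_smul]
        congr 1
        group
      rwa [this]
    · rintro ⟨k, hk, hx⟩
      refine ⟨(h * s)⁻¹ * k * s, ?_, ?_⟩
      · have : (h * s)⁻¹ * k * s = s⁻¹ * (h⁻¹ * k) * s⁻¹⁻¹ := by group
        rw [this]
        exact hH.conj_mem _ (H.mul_mem (H.inv_mem hh) hk) s⁻¹
      · have : (h * s) * ((h * s)⁻¹ * k * s) = k * s := by group
        rw [this]
        have : (k * s) • Y = k • (s • Y) := by rw [smul_smul]
        rw [this, hs]
        exact hx
  -- factor lemma
  have factor : ∀ g : G, (g • T ∩ T).Nonempty →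
      ∃ h ∈ H, ∃ s : G, s • Y = Y ∧ g = h * s := by
    intro g ⟨x, hx1, hx2⟩
    obtain ⟨h1, hh1, hx1⟩ := (smulT g x).mp hx1
    obtain ⟨h2, hh2, hx2⟩ := (memT x).mp hx2
    have hs : (h2⁻¹ * (g * h1)) • Y = Y := by
      apply hreg
      obtain ⟨y, hy, hxy⟩ := hx1
      refine ⟨h2⁻¹ • x, ⟨y, hy, ?_⟩, ?_⟩
      · rw [← hxy, smul_smul]
      · exact Set.mem_smul_set_iff_inv_smul_mem.mp hx2
    set s := h2⁻¹ * (g * h1) with hsdef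
    refine ⟨h2 * (s * h1⁻¹ * s⁻¹), H.mul_mem hh2 (hH.conj_mem _ (H.inv_mem hh1) s), s, hs, ?_⟩
    rw [hsdef]; group
  constructor
  · intro g hne
    obtain ⟨h, hh, s, hs, rfl⟩ := factor g hne
    exact key h hh s hs
  · ext g
    simp only [Set.mem_setOf_eq]
    constructor
    · intro hg
      by_cases hTne : T.Nonempty
      · exact factor g (by rw [hg]; exact ⟨hTne.choose, hTne.choose_spec, hTne.choose_spec⟩)
      · -- T empty ⇒ Y empty ⇒ every s stabilises Y
        have hY : Y = ∅ := by
          rw [Set.not_nonempty_iff_eq_empty] at hTne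
          have : Y ⊆ T := by
            intro x hx
            exact (memT x).mpr ⟨1, H.one_mem, by simpa using hx⟩
          rw [hTne] at this
          exact Set.subset_empty_iff.mp this
        exact ⟨1, H.one_mem, g, by simp [hY], by simp⟩
    · rintro ⟨h, hh, s, hs, rfl⟩
      exact key h hh s hs
end

section
/- Let U be an associative unital ring which is also a ℚ-algebra, and let f, x ∈ U satisfy x·f − f·x = 1. Let M be a right U-module, let n ≥ 0 be an integer, and let q₀, q₁, …, qₙ ∈ M satisfy qⱼ·f = 0 for all 0 ≤ j ≤ n. Then (∑_{j=0}^{n} qⱼ·xʲ) · (fⁿ/n!) = qₙ. -/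
open MulOpposite

private lemma aux_one {U : Type*} [Ring U] [Algebra ℚ U]
    {M : Type*} [AddCommGroup M] [Module Uᵐᵒᵖ M]
    (f x : U) (hfx : x * f - f * x = 1)
    (m : M) (hm : op f • m = 0) (j : ℕ) :
    op f • (op (x ^ j) • m) = j • (op (x ^ (j - 1)) • m) := by
  induction j with
  | zero => simpa using hm
  | succ j ih =>
    have hx : op (x ^ (j + 1)) • m = op x • (op (x ^ j) • m) := by
      rw [← mul_smul, ← op_mul, ← pow_succ]
    have hxf : x * f = 1 + f * x := sub_eq_iff_eq_add.mp hfx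
    have key : op f • (op x • (op (x ^ j) • m)) =
        op x • (op f • (op (x ^ j) • m)) + op (x ^ j) • m := by
      rw [← mul_smul, ← op_mul, hxf, op_add, op_mul, add_smul, mul_smul, op_one, one_smul,
        add_comm]
    rw [hx, key, ih, smul_comm]
    cases j with
    | zero => simp
    | succ k =>
      have : op x • (op (x ^ (k + 1 - 1)) • m) = op (x ^ (k + 1)) • m := by
        rw [← mul_smul, ← op_mul, Nat.add_sub_cancel, ← pow_succ]
      rw [this, Nat.add_sub_cancel]
      simp [succ_nsmul]

private lemma aux_pow {U : Type*} [Ring U] [Algebra ℚ U]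
    {M : Type*} [AddCommGroup M] [Module Uᵐᵒᵖ M]
    (f x : U) (hfx : x * f - f * x = 1)
    (m : M) (hm : op f • m = 0) (n j : ℕ) :
    op (f ^ n) • (op (x ^ j) • m) =
      j.descFactorial n • (op (x ^ (j - n)) • m) := by
  induction n with
  | zero => simp
  | succ n ih =>
    have h1 : (op (f ^ (n + 1)) : Uᵐᵒᵖ) = op f * op (f ^ n) := by
      rw [← op_mul, ← pow_succ]
    rw [h1, mul_smul, ih, smul_comm, aux_one f x hfx m hm, Nat.descFactorial_succ, mul_nsmul,
      Nat.sub_sub, smul_comm]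

/-- If `x·f − f·x = 1` in a `ℚ`-algebra `U`, `M` is a right `U`-module, and
`q₀, …, qₙ ∈ M` are all killed by `f`, then `(∑ⱼ qⱼ·xʲ)·(fⁿ/n!) = qₙ`. -/
theorem stmt_3 {U : Type*} [Ring U] [Algebra ℚ U]
    {M : Type*} [AddCommGroup M] [Module Uᵐᵒᵖ M]
    (f x : U) (hfx : x * f - f * x = 1)
    (n : ℕ) (q : Fin (n + 1) → M) (hq : ∀ j, MulOpposite.op f • q j = 0) :
    MulOpposite.op ((n.factorial : ℚ)⁻¹ • f ^ n) •
        (∑ j : Fin (n + 1), MulOpposite.op (x ^ (j : ℕ)) • q j) = q (Fin.last n) := by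
  set r : U := algebraMap ℚ U (n.factorial : ℚ)⁻¹ with hr
  have hsplit : (n.factorial : ℚ)⁻¹ • f ^ n = f ^ n * r := by
    rw [Algebra.smul_def, Algebra.commutes]
  have hterm : ∀ j : Fin (n + 1),
      op ((n.factorial : ℚ)⁻¹ • f ^ n) • (op (x ^ (j : ℕ)) • q j)
        = op r • ((j : ℕ).descFactorial n • (op (x ^ ((j : ℕ) - n)) • q j)) := by
    intro j
    rw [hsplit, op_mul, mul_smul, aux_pow f x hfx (q j) (hq j) n (j : ℕ)]
  rw [Finset.smul_sum]
  rw [Finset.sum_eq_single (Fin.last n)]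
  · rw [hterm, Fin.val_last, Nat.descFactorial_self, Nat.sub_self, pow_zero, op_one, one_smul,
      smul_comm, ← smul_assoc]
    have : (n.factorial • op r : Uᵐᵒᵖ) = 1 := by
      rw [← op_smul, ← Nat.cast_smul_eq_nsmul ℚ, hr, Algebra.smul_def, ← map_mul,
        mul_inv_cancel₀ (by exact_mod_cast n.factorial_ne_zero), map_one, op_one]
    rw [this, one_smul]
  · intro j _ hj
    rw [hterm, Nat.descFactorial_eq_zero_iff_lt.mpr, zero_smul, smul_zero]
    have := j.isLt
    have hne : (j : ℕ) ≠ n := fun h => hj (Fin.ext (by simp [h]))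
    omega
  · intro h; exact absurd (Finset.mem_univ _) h
end

section
/- Let K be a field, let R be a subring of K, and let π ∈ R be a nonzero element that is invertible in K. Let O be a commutative K-algebra and let A be an R-subalgebra of O such that for every x ∈ O there exists an integer n ≥ 0 with πⁿ·x ∈ A. Let ∂₁, …, ∂_d be K-linear derivations of O that are linearly independent over O and satisfy ∂ᵢ(A) ⊆ A for all i. Let 1 ≤ r ≤ d and let f₁, …, f_r ∈ O satisfy ∂ᵢ(fⱼ) = δᵢⱼ for all 1 ≤ i ≤ d and 1 ≤ j ≤ r. Let I be the ideal of O generated by f₁, …, f_r, and set 𝕀 := I ∩ A and L := A·∂₁ + ⋯ + A·∂_d (an A-submodule of the derivations of O). Then the normaliser N_L(𝕀) := {v ∈ L : v(𝕀) ⊆ 𝕀} equals 𝕀·∂₁ ⊕ ⋯ ⊕ 𝕀·∂_r ⊕ A·∂_{r+1} ⊕ ⋯ ⊕ A·∂_d. -/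
lemma deriv_sum_apply' {K O : Type*} [CommRing K] [CommRing O] [Algebra K O]
    {ι : Type*} (s : Finset ι) (g : ι → Derivation K O O) (x : O) :
    (∑ i ∈ s, g i) x = ∑ i ∈ s, g i x := by
  induction s using Finset.cons_induction with
  | empty => simp
  | cons a s ha ih => simp [Derivation.add_apply, ih]

/-- Computation of the normaliser `N_L(𝕀)` of `𝕀 = I ∩ A` in `L = A·∂₁ ⊕ ⋯ ⊕ A·∂_d`, where
`I = (f₁, …, f_r)` and `∂ᵢ(fⱼ) = δᵢⱼ`:  `N_L(𝕀) = 𝕀∂₁ ⊕ ⋯ ⊕ 𝕀∂_r ⊕ A∂_{r+1} ⊕ ⋯ ⊕ A∂_d`. -/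
theorem stmt_4 {K : Type*} [Field K] (R : Subring K) (π : R) (hπ : (π : K) ≠ 0)
    {O : Type*} [CommRing O] [Algebra K O]
    (A : Subring O)
    (hRA : ∀ r : R, algebraMap K O (r : K) ∈ A)
    (hdiv : ∀ x : O, ∃ n : ℕ, algebraMap K O ((π : K) ^ n) * x ∈ A)
    (d : ℕ) (D : Fin d → Derivation K O O)
    (hind : LinearIndependent O D)
    (hDA : ∀ i : Fin d, ∀ a ∈ A, D i a ∈ A)
    (r : ℕ) (hr1 : 1 ≤ r) (hrd : r ≤ d)
    (f : Fin r → O)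
    (hδ : ∀ (i : Fin d) (j : Fin r), D i (f j) = if (i : ℕ) = (j : ℕ) then 1 else 0) :
    {v : Derivation K O O |
        (∃ a : Fin d → O, (∀ i, a i ∈ A) ∧ v = ∑ i, a i • D i) ∧
        ∀ s : O, s ∈ Ideal.span (Set.range f) ∧ s ∈ A →
          v s ∈ Ideal.span (Set.range f) ∧ v s ∈ A} =
    {v : Derivation K O O |
        ∃ a : Fin d → O,
          (∀ i : Fin d, if (i : ℕ) < r then a i ∈ Ideal.span (Set.range f) ∧ a i ∈ A
            else a i ∈ A) ∧
          v = ∑ i, a i • D i} := by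
  set I := Ideal.span (Set.range f) with hI
  -- key : derivations with index ≥ r map I into I
  have key : ∀ i : Fin d, r ≤ (i : ℕ) → ∀ s ∈ I, D i s ∈ I := by
    intro i hi s hs
    refine Submodule.span_induction (p := fun s _ => D i s ∈ I) ?_ ?_ ?_ ?_ hs
    · rintro x ⟨j, rfl⟩
      have : (i : ℕ) ≠ (j : ℕ) := by omega
      rw [hδ i j, if_neg this]; exact I.zero_mem
    · simp
    · intro x y _ _ hx hy; rw [map_add]; exact I.add_mem hx hy
    · intro c x hxI hx
      rw [smul_eq_mul, Derivation.leibniz, smul_eq_mul, smul_eq_mul]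
      exact I.add_mem (Ideal.mul_mem_left _ _ hx) (Ideal.mul_mem_right _ _ hxI)
  -- evaluation of ∑ a i • D i at f j
  have eval : ∀ (a : Fin d → O) (j : Fin r),
      (∑ i, a i • D i) (f j) = a ⟨(j : ℕ), lt_of_lt_of_le j.2 hrd⟩ := by
    intro a j
    rw [deriv_sum_apply']
    rw [Finset.sum_eq_single (⟨(j : ℕ), lt_of_lt_of_le j.2 hrd⟩ : Fin d)]
    · simp [Derivation.smul_apply, hδ]
    · intro b _ hb
      have : (b : ℕ) ≠ (j : ℕ) := fun h => hb (Fin.ext h)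
      simp [Derivation.smul_apply, hδ, this]
    · simp
  ext v
  simp only [Set.mem_setOf_eq]
  constructor
  · rintro ⟨⟨a, haA, hva⟩, hnorm⟩
    refine ⟨a, fun i => ?_, hva⟩
    by_cases hi : (i : ℕ) < r
    · rw [if_pos hi]
      refine ⟨?_, haA i⟩
      set j : Fin r := ⟨(i : ℕ), hi⟩ with hj
      obtain ⟨n, hn⟩ := hdiv (f j)
      have hfI : f j ∈ I := Ideal.subset_span ⟨j, rfl⟩
      have hsI : algebraMap K O ((π : K) ^ n) * f j ∈ I := Ideal.mul_mem_left _ _ hfI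
      have hv := (hnorm _ ⟨hsI, hn⟩).1
      have hcalc : v (algebraMap K O ((π : K) ^ n) * f j)
          = algebraMap K O ((π : K) ^ n) * a i := by
        rw [← Algebra.smul_def, Derivation.map_smul, hva, eval, Algebra.smul_def]
      rw [hcalc] at hv
      have hu : IsUnit (algebraMap K O ((π : K) ^ n)) :=
        (isUnit_iff_ne_zero.2 (pow_ne_zero n hπ)).map (algebraMap K O)
      exact (I.unit_mul_mem_iff_mem hu).1 hv
    · rw [if_neg hi]; exact haA i
  · rintro ⟨a, ha, hva⟩
    have haA : ∀ i, a i ∈ A := by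
      intro i
      by_cases hi : (i : ℕ) < r
      · have := ha i; rw [if_pos hi] at this; exact this.2
      · have := ha i; rw [if_neg hi] at this; exact this
    refine ⟨⟨a, haA, hva⟩, ?_⟩
    rintro s ⟨hsI, hsA⟩
    subst hva
    rw [deriv_sum_apply']
    constructor
    · refine Ideal.sum_mem _ fun i _ => ?_
      rw [Derivation.smul_apply, smul_eq_mul]
      by_cases hi : (i : ℕ) < r
      · have := ha i; rw [if_pos hi] at this; exact Ideal.mul_mem_right _ _ this.1
      · exact Ideal.mul_mem_left _ _ (key i (le_of_not_gt hi) s hsI)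
    · refine Subring.sum_mem _ fun i _ => ?_
      rw [Derivation.smul_apply, smul_eq_mul]
      exact A.mul_mem (haA i) (hDA i s hsA)
end

section
/- Let k be an algebraically closed field, let n ≥ 0, let I be a homogeneous ideal of the polynomial ring k[x₀, …, xₙ], and let V(I) := {v ∈ k^{n+1} : f(v) = 0 for all f ∈ I} be its affine cone. Define Z := {g ∈ GL_{n+1}(k) : there exists v ∈ k^{n+1}, v ≠ 0, with v ∈ V(I) and g⁻¹·v ∈ V(I)}. Then Z is Zariski closed in GL_{n+1}(k): there exists a set S of polynomials over k in the (n+1)² matrix entries such that Z = {g ∈ GL_{n+1}(k) : p(g) = 0 for all p ∈ S}. -/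
/-!
For a matrix `M` write `f ∘ M` for the substitution `xᵢ ↦ ∑ⱼ Mᵢⱼ xⱼ`. Then `g ∈ Z` iff the cones
`V(I)` and `g⁻¹ V(I) = V(I ∘ g)` share a nonzero point. If `g ∉ Z`, the Nullstellensatz puts all
monomials of some degree `N` into `I + I ∘ g`; as `I` is homogeneous, the degree-`N` elements of
`I` and of `I ∘ g` then span all forms of degree `N`. Choosing a basis among their coefficient
vectors gives a square matrix whose entries depend polynomially on the substituted matrix; its
determinant `D` does not vanish at `g`. At any `M` for which `V(I)` and `V(I ∘ M)` share a nonzero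
point `w`, the values at `w` of the monomials of degree `N` form a nonzero kernel vector of that
matrix, so `D(M) = 0`.
-/

open Matrix

theorem exists_linearIndependent_comp_of_span_eq_top {k T B : Type*} [Field k] [Fintype B]
    {v : T → B → k} (hv : Submodule.span k (Set.range v) = ⊤) :
    ∃ e : B → T, LinearIndependent k (v ∘ e) := by
  obtain ⟨κ, a, -, hspan, hli⟩ := exists_linearIndependent' k v
  let e := (Module.Basis.mk hli (by rw [hspan, hv])).indexEquiv (Pi.basisFun k B)
  exact ⟨a ∘ e.symm, hli.comp _ e.symm.injective⟩

namespace MvPolynomial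

variable {k : Type*} [Field k]

theorem exists_eval_ne_zero_of_span_eq_top {ι T B : Type*} [Fintype B] [DecidableEq B]
    (u : T → (ι → k) → B → k) (hu : ∀ t b, ∃ P : MvPolynomial ι k, ∀ x, eval x P = u t x b)
    {x₀ : ι → k} (hx₀ : Submodule.span k (Set.range fun t => u t x₀) = ⊤) :
    ∃ D : MvPolynomial ι k, eval x₀ D ≠ 0 ∧
      ∀ x, ∀ w ≠ 0, (∀ t, u t x ⬝ᵥ w = 0) → eval x D = 0 := by
  obtain ⟨e, he⟩ := exists_linearIndependent_comp_of_span_eq_top hx₀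
  choose P hP using hu
  have heval : ∀ x, eval x (of fun b b' => P (e b) b').det = (of fun b b' => u (e b) x b').det :=
    fun x => by
      rw [RingHom.map_det]
      congr 1
      ext b b'
      simp [hP]
  refine ⟨(of fun b b' => P (e b) b').det, ?_, fun x w hw hwu => ?_⟩
  · rw [heval, ← isUnit_iff_ne_zero, ← isUnit_iff_isUnit_det,
      ← linearIndependent_rows_iff_isUnit]
    exact he
  · rw [heval, ← exists_mulVec_eq_zero_iff]
    exact ⟨w, hw, _root_.funext fun b => hwu (e b)⟩

variable {σ : Type*} [Fintype σ]

noncomputable def linearSubst {A : Type*} [CommRing A] [Algebra k A] (M : Matrix σ σ A) :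
    MvPolynomial σ k →ₐ[k] MvPolynomial σ A :=
  aeval fun i => ∑ j, C (M i j) * X j

theorem eval_linearSubst (M : Matrix σ σ k) (v : σ → k) (f : MvPolynomial σ k) :
    eval v (linearSubst M f) = eval (M *ᵥ v) f := by
  rw [← coe_aeval_eq_eval, ← coe_aeval_eq_eval]
  show (aeval v).comp (aeval _) f = _
  rw [comp_aeval]
  exact congrArg (fun y => aeval y f) (_root_.funext fun i => by simp [mulVec, dotProduct])

theorem IsHomogeneous.linearSubst {A : Type*} [CommRing A] [Algebra k A] (M : Matrix σ σ A)
    {f : MvPolynomial σ k} {d : ℕ} (hf : f.IsHomogeneous d) :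
    (linearSubst M f).IsHomogeneous d := by
  have h := hf.aeval (fun i => ∑ j, C (M i j) * X j) (n := 1) fun i =>
    IsHomogeneous.sum _ _ _ fun j _ => isHomogeneous_C_mul_X (M i j) j
  rwa [one_mul] at h

theorem homogeneousComponent_linearSubst (M : Matrix σ σ k) (N : ℕ) (f : MvPolynomial σ k) :
    homogeneousComponent N (linearSubst M f) = linearSubst M (homogeneousComponent N f) := by
  conv_lhs => rw [← sum_homogeneousComponent f, map_sum, map_sum]
  simp_rw [homogeneousComponent_of_mem ((homogeneousComponent_isHomogeneous _ f).linearSubst M)]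
  simp only [Finset.sum_ite_eq, Finset.mem_range, Nat.lt_succ_iff]
  split_ifs with h
  · rfl
  · rw [homogeneousComponent_eq_zero _ _ (not_le.mp h), map_zero]

theorem linearSubst_surjective [DecidableEq σ] [Infinite k] (g : GL σ k) :
    Function.Surjective (linearSubst (g : Matrix σ σ k) : MvPolynomial σ k → _) := fun f =>
  ⟨linearSubst (↑g⁻¹ : Matrix σ σ k) f, funext fun v => by
    rw [eval_linearSubst, eval_linearSubst, mulVec_mulVec, Units.inv_mul, one_mulVec]⟩

theorem exists_eval_eq_coeff_linearSubst (f : MvPolynomial σ k) (β : σ →₀ ℕ) :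
    ∃ P : MvPolynomial (σ × σ) k, ∀ x : σ × σ → k,
      eval x P = coeff β (linearSubst (of fun i j => x (i, j)) f) := by
  refine ⟨coeff β (linearSubst (of fun i j => X (i, j) : Matrix σ σ _) f), fun x => ?_⟩
  have hspec : (mapAlgHom (aeval x)).comp (linearSubst (of fun i j => X (i, j))) =
      linearSubst (k := k) (of fun i j => x (i, j)) := by
    ext i
    simp [linearSubst]
  rw [← hspec, AlgHom.comp_apply, mapAlgHom_apply, coeff_map, coe_aeval_eq_eval]

theorem exists_monomial_mem_of_zeroLocus_subset [IsAlgClosed k] {J : Ideal (MvPolynomial σ k)}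
    (hJ : zeroLocus k J ⊆ {0}) : ∃ N, ∀ β : σ →₀ ℕ, β.degree = N → monomial β 1 ∈ J := by
  have hX : ∀ i, ∃ m : ℕ, (X i : MvPolynomial σ k) ^ m ∈ J := fun i => by
    have hXi : X i ∈ vanishingIdeal k (zeroLocus k J) := fun x hx => by
      simp [Set.mem_singleton_iff.mp (hJ hx)]
    rw [vanishingIdeal_zeroLocus_eq_radical] at hXi
    exact hXi
  choose m hm using hX
  refine ⟨∑ i, m i + 1, fun β hβ => ?_⟩
  obtain ⟨i, hi⟩ : ∃ i, m i ≤ β i := by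
    by_contra! h
    have := Finset.sum_le_sum fun i (_ : i ∈ Finset.univ) => (h i).le
    rw [← Finsupp.degree_eq_sum, hβ] at this
    omega
  have hβ_split : β = (β - Finsupp.single i (m i)) + Finsupp.single i (m i) :=
    (tsub_add_cancel_of_le (Finsupp.single_le_iff.mpr hi)).symm
  rw [hβ_split, ← mul_one (1 : k), ← monomial_mul, ← X_pow_eq_monomial]
  exact J.mul_mem_left _ (hm i)

section HomogeneousCoords

variable [DecidableEq σ]

open Finset in
noncomputable def homogeneousCoords (N : ℕ) :
    MvPolynomial σ k →ₗ[k] (finsuppAntidiag (univ : Finset σ) N → k) :=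
  LinearMap.pi fun β => lcoeff k β.1

open Finset in
noncomputable def monomialValues (N : ℕ) (v : σ → k) : finsuppAntidiag (univ : Finset σ) N → k :=
  fun β => eval v (monomial β.1 1)

open Finset in
theorem mem_finsuppAntidiag_univ {N : ℕ} {β : σ →₀ ℕ} :
    β ∈ finsuppAntidiag (univ : Finset σ) N ↔ β.degree = N := by
  simp [Finsupp.degree_eq_sum]

theorem homogeneousCoords_dotProduct_monomialValues {p : MvPolynomial σ k} {N : ℕ}
    (hp : p.IsHomogeneous N) (v : σ → k) :
    homogeneousCoords N p ⬝ᵥ monomialValues N v = eval v p := by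
  have hsupp : p.support ⊆ Finset.finsuppAntidiag Finset.univ N := fun β hβ =>
    mem_finsuppAntidiag_univ.mpr (by
      rw [Finsupp.degree_eq_weight_one]; exact hp (mem_support_iff.mp hβ))
  change ∑ β : Finset.finsuppAntidiag Finset.univ N, coeff β.1 p * eval v (monomial β.1 1) = _
  rw [Finset.sum_coe_sort (Finset.finsuppAntidiag Finset.univ N)
    (fun β => coeff β p * eval v (monomial β 1)), eval_eq]
  refine (Finset.sum_subset hsupp fun β _ hβ => ?_).symm.trans (Finset.sum_congr rfl fun β _ => ?_)
  · simp [notMem_support_iff.mp hβ]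
  · rw [eval_monomial, one_mul]; rfl

theorem monomialValues_ne_zero (N : ℕ) {v : σ → k} (hv : v ≠ 0) : monomialValues N v ≠ 0 := by
  obtain ⟨i, hi⟩ := Function.ne_iff.mp hv
  have hβ : Finsupp.single i N ∈ Finset.finsuppAntidiag Finset.univ N := by simp
  intro h
  have := congrFun h ⟨_, hβ⟩
  simp only [monomialValues, Pi.zero_apply] at this
  rw [eval_monomial, one_mul, Finsupp.prod_single_index (by simp)] at this
  exact hi (eq_zero_of_pow_eq_zero this)

theorem homogeneousCoords_monomial {N : ℕ}
    (β : Finset.finsuppAntidiag (Finset.univ : Finset σ) N) :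
    homogeneousCoords N (monomial β.1 (1 : k)) = Pi.single β 1 := by
  ext β'
  by_cases h : β' = β
  · subst h
    simp [homogeneousCoords]
  · simp [homogeneousCoords, coeff_monomial, h, Ne.symm h]

theorem homogeneousCoords_homogeneousComponent (N : ℕ) (p : MvPolynomial σ k) :
    homogeneousCoords N (homogeneousComponent N p) = homogeneousCoords N p := by
  ext β
  simp [homogeneousCoords, coeff_homogeneousComponent, mem_finsuppAntidiag_univ.mp β.2]

end HomogeneousCoords

def ConeMeetsPreimage (I : Ideal (MvPolynomial σ k)) (M : Matrix σ σ k) : Prop :=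
  ∃ w : σ → k, w ≠ 0 ∧ (∀ f ∈ I, eval w f = 0) ∧ ∀ f ∈ I, eval (M *ᵥ w) f = 0

theorem coneMeetsPreimage_iff [DecidableEq σ] (I : Ideal (MvPolynomial σ k)) (g : GL σ k) :
    ConeMeetsPreimage I g ↔ ∃ v : σ → k, v ≠ 0 ∧ (∀ f ∈ I, eval v f = 0) ∧
      ∀ f ∈ I, eval ((↑g⁻¹ : Matrix σ σ k) *ᵥ v) f = 0 := by
  have hinv : ∀ w, (↑g⁻¹ : Matrix σ σ k) *ᵥ ((g : Matrix σ σ k) *ᵥ w) = w := fun w => by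
    rw [mulVec_mulVec, Units.inv_mul, one_mulVec]
  have hinv' : ∀ v, (g : Matrix σ σ k) *ᵥ ((↑g⁻¹ : Matrix σ σ k) *ᵥ v) = v := fun v => by
    rw [mulVec_mulVec, Units.mul_inv, one_mulVec]
  constructor
  · rintro ⟨w, hw, hwI, hgwI⟩
    refine ⟨_, fun h => hw ?_, hgwI, by rwa [hinv]⟩
    rw [← hinv w, h, mulVec_zero]
  · rintro ⟨v, hv, hvI, hgvI⟩
    refine ⟨_, fun h => hv ?_, hgvI, by rwa [hinv']⟩
    rw [← hinv' v, h, mulVec_zero]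

section Translates

variable (I : Ideal (MvPolynomial σ k)) (N : ℕ)

abbrev HomogeneousPart := {f : MvPolynomial σ k // f ∈ I ∧ f.IsHomogeneous N}

noncomputable def translates (M : Matrix σ σ k) :
    HomogeneousPart I N ⊕ HomogeneousPart I N → MvPolynomial σ k :=
  Sum.elim Subtype.val fun f => linearSubst M f.1

variable {I N}

theorem isHomogeneous_translates (M : Matrix σ σ k) :
    ∀ t, (translates I N M t).IsHomogeneous N
  | .inl f => f.2.2
  | .inr f => f.2.2.linearSubst M

theorem eval_translates_eq_zero {M : Matrix σ σ k} {w : σ → k} (hw : ∀ f ∈ I, eval w f = 0)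
    (hMw : ∀ f ∈ I, eval (M *ᵥ w) f = 0) : ∀ t, eval w (translates I N M t) = 0
  | .inl f => hw f.1 f.2.1
  | .inr f => (eval_linearSubst M w f.1).trans (hMw f.1 f.2.1)

theorem exists_eval_eq_coeff_translates (t : HomogeneousPart I N ⊕ HomogeneousPart I N)
    (β : σ →₀ ℕ) : ∃ P : MvPolynomial (σ × σ) k, ∀ x : σ × σ → k,
      eval x P = coeff β (translates I N (of fun i j => x (i, j)) t) := by
  rcases t with f | f
  · exact ⟨C (coeff β f.1), fun x => eval_C _⟩
  · exact exists_eval_eq_coeff_linearSubst f.1 β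

variable [DecidableEq σ]

theorem homogeneousCoords_mem_span_translates [Infinite k]
    (hI : ∀ f ∈ I, ∀ m : ℕ, homogeneousComponent m f ∈ I) (g : GL σ k)
    {p : MvPolynomial σ k} (hp : p ∈ I ⊔ Ideal.map (linearSubst (g : Matrix σ σ k)) I) :
    homogeneousCoords N p ∈
      Submodule.span k (Set.range fun t => homogeneousCoords N (translates I N g t)) := by
  obtain ⟨a, ha, b', hb', rfl⟩ := Submodule.mem_sup.mp hp
  obtain ⟨b, hb, rfl⟩ := (Ideal.mem_map_iff_of_surjective _ (linearSubst_surjective g)).mp hb'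
  rw [map_add, ← homogeneousCoords_homogeneousComponent N a,
    ← homogeneousCoords_homogeneousComponent N (linearSubst _ b),
    homogeneousComponent_linearSubst]
  exact Submodule.add_mem _
    (Submodule.subset_span ⟨.inl ⟨_, hI a ha N, homogeneousComponent_isHomogeneous N a⟩, rfl⟩)
    (Submodule.subset_span ⟨.inr ⟨_, hI b hb N, homogeneousComponent_isHomogeneous N b⟩, rfl⟩)

theorem exists_separating_polynomial [IsAlgClosed k]
    (hI : ∀ f ∈ I, ∀ m : ℕ, homogeneousComponent m f ∈ I) (g : GL σ k)
    (hg : ¬ ConeMeetsPreimage I g) :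
    ∃ D : MvPolynomial (σ × σ) k, eval (fun ij => (g : Matrix σ σ k) ij.1 ij.2) D ≠ 0 ∧
      ∀ M : Matrix σ σ k, ConeMeetsPreimage I M → eval (fun ij => M ij.1 ij.2) D = 0 := by
  have hJ : zeroLocus k (I ⊔ Ideal.map (linearSubst (g : Matrix σ σ k)) I) ⊆ {0} :=
    fun w hw => by_contra fun hw0 =>
      hg ⟨w, hw0, fun f hf => hw f (le_sup_left (a := I) hf), fun f hf => by
        rw [← eval_linearSubst]
        exact hw _ (le_sup_right (a := I) (Ideal.mem_map_of_mem _ hf))⟩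
  obtain ⟨N, hN⟩ := exists_monomial_mem_of_zeroLocus_subset hJ
  have hspan : Submodule.span k
      (Set.range fun t => homogeneousCoords N (translates I N g t)) = ⊤ := by
    rw [eq_top_iff, ← (Pi.basisFun k _).span_eq, Submodule.span_le]
    rintro _ ⟨β, rfl⟩
    rw [Pi.basisFun_apply, ← homogeneousCoords_monomial]
    exact homogeneousCoords_mem_span_translates hI g (hN β.1 (mem_finsuppAntidiag_univ.mp β.2))
  obtain ⟨D, hDg, hDZ⟩ := exists_eval_ne_zero_of_span_eq_top
    (fun t x => homogeneousCoords N (translates I N (of fun i j => x (i, j)) t))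
    (fun t β => exists_eval_eq_coeff_translates t β.1)
    (x₀ := fun ij => (g : Matrix σ σ k) ij.1 ij.2) hspan
  refine ⟨D, hDg, fun M ⟨w, hw0, hwI, hMwI⟩ => hDZ _ _ (monomialValues_ne_zero N hw0) fun t => ?_⟩
  exact (homogeneousCoords_dotProduct_monomialValues (isHomogeneous_translates M t) w).trans
    (eval_translates_eq_zero hwI hMwI t)

end Translates

end MvPolynomial

/-- The intersection obstruction `Z_Y = {g ∈ GL_{n+1}(k) : Y ∩ gY ≠ ∅}` of a projective
variety `Y = V₊(I) ⊆ ℙⁿ(k)` is Zariski closed in `GL_{n+1}(k)`. -/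
theorem stmt_5 {k : Type*} [Field k] [IsAlgClosed k] (n : ℕ)
    (I : Ideal (MvPolynomial (Fin (n + 1)) k))
    (hI : ∀ f ∈ I, ∀ m : ℕ, MvPolynomial.homogeneousComponent m f ∈ I) :
    ∃ S : Set (MvPolynomial (Fin (n + 1) × Fin (n + 1)) k),
      {g : Matrix.GeneralLinearGroup (Fin (n + 1)) k |
          ∃ v : Fin (n + 1) → k, v ≠ 0 ∧
            (∀ f ∈ I, MvPolynomial.eval v f = 0) ∧
            (∀ f ∈ I, MvPolynomial.eval
              (((g⁻¹ : Matrix.GeneralLinearGroup (Fin (n + 1)) k) :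
                Matrix (Fin (n + 1)) (Fin (n + 1)) k).mulVec v) f = 0)} =
      {g : Matrix.GeneralLinearGroup (Fin (n + 1)) k |
          ∀ p ∈ S, MvPolynomial.eval
            (fun ij : Fin (n + 1) × Fin (n + 1) =>
              (g : Matrix (Fin (n + 1)) (Fin (n + 1)) k) ij.1 ij.2) p = 0} := by
  refine ⟨{p | ∀ M : Matrix (Fin (n + 1)) (Fin (n + 1)) k, MvPolynomial.ConeMeetsPreimage I M →
    MvPolynomial.eval (fun ij => M ij.1 ij.2) p = 0}, Set.ext fun g => ?_⟩
  simp only [Set.mem_ofPred_eq, ← MvPolynomial.coneMeetsPreimage_iff]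
  refine ⟨fun hg p hp => hp g hg, fun hg => by_contra fun hgZ => ?_⟩
  obtain ⟨D, hDg, hDZ⟩ := MvPolynomial.exists_separating_polynomial hI g hgZ
  exact hDg (hg D hDZ)
end

section
/- Let k be an algebraically closed field, let n ≥ 1, and let I be a radical homogeneous ideal of A := k[x₀, …, xₙ] such that the Krull dimension of A/I is at least 2 (equivalently, the projective variety Y := V₊(I) ⊆ ℙⁿ(k) has dimension at least 1). Let h ∈ GL_{n+1}(k) satisfy rank(h − 1) ≤ 1, where h − 1 is the matrix h minus the identity matrix. Then Y ∩ hY ≠ ∅: there exists v ∈ k^{n+1}, v ≠ 0, such that f(v) = 0 and f(h⁻¹·v) = 0 for every f ∈ I. -/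
open MvPolynomial Matrix

/-!
Since `rank (h - 1) ≤ 1`, we have `h - 1 = u wᵀ`, so `h` and `h⁻¹` fix the hyperplane
`w ⬝ᵥ v = 0` pointwise, and it suffices that the cone `V(I)` meets this hyperplane away from `0`.
Otherwise the Nullstellensatz puts a power of every variable into `I + (ℓ)`, `ℓ = ∑ wⱼ Xⱼ`, and
homogeneity of `I` turns this into relations `Xᵢ ^ (N + 1) ≡ Gᵢ ℓ (mod I)` with `deg Gᵢ = N`.
Rewriting monomials with these relations makes `A ⧸ I` a finite module over `k[T]` acting
through `T ↦ ℓ`, hence integral over `k[T]`, so `dim A ⧸ I ≤ dim k[T] = 1`.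
-/

theorem Matrix.exists_eq_vecMulVec_of_rank_le_one {K m n : Type*} [Field K] [Fintype n]
    {M : Matrix m n K} (hM : M.rank ≤ 1) : ∃ u w, M = vecMulVec u w := by
  classical
  obtain ⟨⟨u, hu⟩⟩ := (Submodule.finrank_le_one_iff_isPrincipal _).mp hM
  have hcol : ∀ j, ∃ c : K, c • u = M *ᵥ Pi.single j 1 := fun j => by
    rw [← Submodule.mem_span_singleton, ← hu]
    exact LinearMap.mem_range_self _ _
  choose w hw using hcol
  refine ⟨u, w, Matrix.ext fun i j => ?_⟩
  simpa [mulVec_single, vecMulVec_apply, mul_comm] using (congrFun (hw j) i).symm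

theorem Matrix.GeneralLinearGroup.inv_mulVec_eq_self {n R : Type*} [Fintype n] [DecidableEq n]
    [CommRing R] {h : GL n R} {v : n → R} (hv : (h : Matrix n n R) *ᵥ v = v) :
    (↑h⁻¹ : Matrix n n R) *ᵥ v = v := by
  conv_lhs => rw [← hv]
  rw [mulVec_mulVec, ← Units.val_mul, inv_mul_cancel, Units.val_one, one_mulVec]

theorem ringKrullDim_le_of_isIntegral (R S : Type*) [CommRing R] [CommRing S] [Algebra R S]
    [Algebra.IsIntegral R S] : ringKrullDim S ≤ ringKrullDim R :=
  Order.krullDim_le_of_strictMono (fun p => ⟨p.asIdeal.comap (algebraMap R S), inferInstance⟩)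
    fun _ _ hpq => Ideal.IsIntegral.comap_lt_comap hpq

namespace MvPolynomial

attribute [local instance] MvPolynomial.gradedAlgebra

variable {σ R : Type*} [CommRing R]

theorem homogeneousComponent_add_mul_of_isHomogeneous {ℓ : MvPolynomial σ R} {e : ℕ}
    (hℓ : ℓ.IsHomogeneous e) (a : MvPolynomial σ R) (N : ℕ) :
    homogeneousComponent (N + e) (a * ℓ) = homogeneousComponent N a * ℓ := by
  have h := DirectSum.coe_decompose_mul_of_right_mem_of_le (homogeneousSubmodule σ R) (a := a)
    (n := N + e) ((mem_homogeneousSubmodule _ _).mpr hℓ) (Nat.le_add_left e N)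
  rw [Nat.add_sub_cancel] at h
  rwa [← decomposition.decompose'_apply, ← decomposition.decompose'_apply]

theorem exists_isHomogeneous_sub_mul_mem {I : Ideal (MvPolynomial σ R)}
    (hI : ∀ f ∈ I, ∀ m, homogeneousComponent m f ∈ I) {ℓ p : MvPolynomial σ R} {e N : ℕ}
    (hℓ : ℓ.IsHomogeneous e) (hp : p.IsHomogeneous (N + e)) (hmem : p ∈ I ⊔ Ideal.span {ℓ}) :
    ∃ G : MvPolynomial σ R, G.IsHomogeneous N ∧ p - G * ℓ ∈ I := by
  obtain ⟨f, hf, g, hg, rfl⟩ := Submodule.mem_sup.mp hmem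
  obtain ⟨a, rfl⟩ := Ideal.mem_span_singleton'.mp hg
  refine ⟨homogeneousComponent N a, homogeneousComponent_isHomogeneous N a, ?_⟩
  have hcomp : homogeneousComponent (N + e) f + homogeneousComponent N a * ℓ = f + a * ℓ := by
    rw [← homogeneousComponent_add_mul_of_isHomogeneous hℓ, ← map_add,
      homogeneousComponent_eq_self hp]
  rw [← hcomp, add_sub_cancel_right]
  exact hI f hf _

theorem X_mem_radical_of_forall_zero {k : Type*} [Field k] [IsAlgClosed k] [Finite σ]
    {J : Ideal (MvPolynomial σ k)} (hJ : ∀ x : σ → k, (∀ f ∈ J, eval x f = 0) → x = 0) (i : σ) :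
    X i ∈ J.radical := by
  rw [← vanishingIdeal_zeroLocus_eq_radical (K := k), mem_vanishingIdeal_iff]
  intro x hx
  rw [hJ x hx]
  simp

theorem finite_of_pow_X_eq_smul {S B : Type*} [CommRing S] [CommRing B] [Algebra R S]
    [Algebra R B] [Algebra S B] [IsScalarTower R S B] [Finite σ]
    (φ : MvPolynomial σ R →ₐ[R] B) (hφ : Function.Surjective φ) (s : S) {N : ℕ}
    (G : σ → MvPolynomial σ R) (hG : ∀ i, (G i).totalDegree < N)
    (hX : ∀ i, φ (X i ^ N) = s • φ (G i)) : Module.Finite S B := by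
  set M : Submodule S B := Submodule.span S (Set.range fun a : σ → Fin N =>
    φ (monomial (Finsupp.equivFunOnFinite.symm fun i => (a i : ℕ)) 1))
  have mem_of_monomial_mem : ∀ p : MvPolynomial σ R,
      (∀ m ∈ p.support, φ (monomial m 1) ∈ M) → φ p ∈ M := by
    intro p hp
    rw [p.as_sum, map_sum]
    refine Submodule.sum_mem _ fun m hm => ?_
    rw [← mul_one (coeff m p), ← smul_eq_mul, ← smul_monomial, map_smul]
    exact Submodule.smul_of_tower_mem _ _ (hp m hm)
  have monomial_mem : ∀ m : σ →₀ ℕ, φ (monomial m 1) ∈ M := by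
    intro m
    induction hd : m.degree using Nat.strong_induction_on generalizing m with
    | _ d ih =>
    by_cases hsmall : ∀ i, m i < N
    · exact Submodule.subset_span ⟨fun i => ⟨m i, hsmall i⟩, by simp⟩
    obtain ⟨i, hi⟩ := not_forall.mp hsmall
    rw [not_lt] at hi
    obtain ⟨m', rfl⟩ : ∃ m', m = Finsupp.single i N + m' :=
      ⟨m - Finsupp.single i N, (add_tsub_cancel_of_le (Finsupp.single_le_iff.mpr hi)).symm⟩
    rw [← one_mul (1 : R), ← monomial_mul, ← X_pow_eq_monomial, map_mul, hX, smul_mul_assoc,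
      ← map_mul]
    refine M.smul_mem s (mem_of_monomial_mem _ fun m'' hm'' => ih _ ?_ m'' rfl)
    have hm''_le : m''.degree ≤ (G i * monomial m' 1).totalDegree := le_totalDegree hm''
    have hmul_le := totalDegree_mul (G i) (monomial m' (1 : R))
    have hm'_le : (monomial m' (1 : R)).totalDegree ≤ m'.degree := totalDegree_monomial_le m' 1
    have hGi := hG i
    rw [← hd, map_add, Finsupp.degree_single]
    omega
  have hM_top : M = ⊤ := eq_top_iff.mpr fun b _ => by
    obtain ⟨p, rfl⟩ := hφ b
    exact mem_of_monomial_mem p fun m _ => monomial_mem m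
  exact ⟨hM_top ▸ Submodule.fg_span (Set.finite_range _)⟩

theorem ringKrullDim_quotient_le_one_of_pow_X_sub_mul_mem {k : Type*} [Field k] [Finite σ]
    {I : Ideal (MvPolynomial σ k)} (ℓ : MvPolynomial σ k) {N : ℕ} (G : σ → MvPolynomial σ k)
    (hG : ∀ i, (G i).totalDegree < N) (hGI : ∀ i, X i ^ N - G i * ℓ ∈ I) :
    ringKrullDim (MvPolynomial σ k ⧸ I) ≤ 1 := by
  let _ := (Polynomial.aeval (R := k) (Ideal.Quotient.mk I ℓ)).toAlgebra
  have : IsScalarTower k (Polynomial k) (MvPolynomial σ k ⧸ I) :=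
    .of_algebraMap_eq' (Polynomial.aeval _).comp_algebraMap.symm
  have := finite_of_pow_X_eq_smul (Ideal.Quotient.mkₐ k I) (Ideal.Quotient.mkₐ_surjective k I)
    (Polynomial.X : Polynomial k) G hG fun i => by
      rw [Algebra.smul_def, RingHom.algebraMap_toAlgebra, Ideal.Quotient.mkₐ_eq_mk,
        Ideal.Quotient.eq.mpr (hGI i)]
      simp [mul_comm]
  calc ringKrullDim (MvPolynomial σ k ⧸ I)
      ≤ ringKrullDim (Polynomial k) := ringKrullDim_le_of_isIntegral _ _
    _ = 1 := by rw [Polynomial.ringKrullDim_of_isNoetherianRing, ringKrullDim_eq_zero_of_field]; rfl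

theorem exists_ne_zero_forall_eval_eq_zero_and_dotProduct_eq_zero {k : Type*} [Field k]
    [IsAlgClosed k] [Fintype σ] {I : Ideal (MvPolynomial σ k)}
    (hI : ∀ f ∈ I, ∀ m, homogeneousComponent m f ∈ I)
    (hdim : 2 ≤ ringKrullDim (MvPolynomial σ k ⧸ I)) (w : σ → k) :
    ∃ v : σ → k, v ≠ 0 ∧ (∀ f ∈ I, eval v f = 0) ∧ w ⬝ᵥ v = 0 := by
  by_contra! hcon
  set ℓ : MvPolynomial σ k := ∑ j, C (w j) * X j
  have hℓ : ℓ.IsHomogeneous 1 := IsHomogeneous.sum _ _ _ fun j _ => by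
    simpa using (isHomogeneous_C _ (w j)).mul (isHomogeneous_X _ j)
  have eval_ℓ : ∀ v, eval v ℓ = w ⬝ᵥ v := fun v => by simp [ℓ, dotProduct]
  have hrad : Ideal.span (Set.range X) ≤ (I ⊔ Ideal.span {ℓ}).radical :=
    Ideal.span_le.mpr <| Set.range_subset_iff.mpr <| X_mem_radical_of_forall_zero fun v hv => by
      by_contra hv0
      refine hcon v hv0 (fun f hf => hv f (Ideal.mem_sup_left hf)) ?_
      rw [← eval_ℓ]
      exact hv ℓ (Ideal.mem_sup_right (Ideal.mem_span_singleton_self ℓ))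
  obtain ⟨N, hN⟩ := Ideal.exists_pow_le_of_le_radical_of_fg hrad
    (Submodule.fg_span (Set.finite_range _))
  have hXN : ∀ i, X i ^ (N + 1) ∈ I ⊔ Ideal.span {ℓ} := fun i => by
    rw [pow_succ]
    exact Ideal.mul_mem_right _ _
      (hN (Ideal.pow_mem_pow (Ideal.subset_span (Set.mem_range_self i)) N))
  choose G hG hGI using fun i =>
    exists_isHomogeneous_sub_mul_mem hI hℓ (isHomogeneous_X_pow i (N + 1)) (hXN i)
  have hle := ringKrullDim_quotient_le_one_of_pow_X_sub_mul_mem ℓ G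
    (fun i => (hG i).totalDegree_le.trans_lt N.lt_succ_self) hGI
  exact absurd (hdim.trans hle) (by norm_num)

end MvPolynomial

theorem stmt_6_general {k : Type*} [Field k] [IsAlgClosed k] (n : ℕ)
    (I : Ideal (MvPolynomial (Fin (n + 1)) k))
    (hhom : ∀ f ∈ I, ∀ m : ℕ, MvPolynomial.homogeneousComponent m f ∈ I)
    (hdim : 2 ≤ ringKrullDim (MvPolynomial (Fin (n + 1)) k ⧸ I))
    (h : Matrix.GeneralLinearGroup (Fin (n + 1)) k)
    (hrk : ((h : Matrix (Fin (n + 1)) (Fin (n + 1)) k) - 1).rank ≤ 1) :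
    ∃ v : Fin (n + 1) → k, v ≠ 0 ∧
      (∀ f ∈ I, MvPolynomial.eval v f = 0) ∧
      (∀ f ∈ I, MvPolynomial.eval
        (((h⁻¹ : Matrix.GeneralLinearGroup (Fin (n + 1)) k) :
          Matrix (Fin (n + 1)) (Fin (n + 1)) k).mulVec v) f = 0) := by
  obtain ⟨u, w, huw⟩ := Matrix.exists_eq_vecMulVec_of_rank_le_one hrk
  obtain ⟨v, hv0, hvI, hvw⟩ :=
    exists_ne_zero_forall_eval_eq_zero_and_dotProduct_eq_zero hhom hdim w
  have hfix : (h : Matrix (Fin (n + 1)) (Fin (n + 1)) k) *ᵥ v = v := by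
    have hker : ((h : Matrix (Fin (n + 1)) (Fin (n + 1)) k) - 1) *ᵥ v = 0 := by
      rw [huw, vecMulVec_mulVec, hvw, MulOpposite.op_zero, zero_smul]
    rwa [sub_mulVec, one_mulVec, sub_eq_zero] at hker
  exact ⟨v, hv0, hvI, by rwa [Matrix.GeneralLinearGroup.inv_mulVec_eq_self hfix]⟩

/-- If `Y = V₊(I) ⊆ ℙⁿ(k)` has dimension ≥ 1 (i.e. `Krull dim A/I ≥ 2`) and
`h ∈ GL_{n+1}(k)` satisfies `rank(h − 1) ≤ 1`, then `Y ∩ hY ≠ ∅`. -/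
theorem stmt_6 {k : Type*} [Field k] [IsAlgClosed k] (n : ℕ) (hn : 1 ≤ n)
    (I : Ideal (MvPolynomial (Fin (n + 1)) k))
    (hrad : I.IsRadical)
    (hhom : ∀ f ∈ I, ∀ m : ℕ, MvPolynomial.homogeneousComponent m f ∈ I)
    (hdim : 2 ≤ ringKrullDim (MvPolynomial (Fin (n + 1)) k ⧸ I))
    (h : Matrix.GeneralLinearGroup (Fin (n + 1)) k)
    (hrk : ((h : Matrix (Fin (n + 1)) (Fin (n + 1)) k) - 1).rank ≤ 1) :
    ∃ v : Fin (n + 1) → k, v ≠ 0 ∧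
      (∀ f ∈ I, MvPolynomial.eval v f = 0) ∧
      (∀ f ∈ I, MvPolynomial.eval
        (((h⁻¹ : Matrix.GeneralLinearGroup (Fin (n + 1)) k) :
          Matrix (Fin (n + 1)) (Fin (n + 1)) k).mulVec v) f = 0) :=
  stmt_6_general n I hhom hdim h hrk
end

section
/- Let k be an algebraically closed field, let n ≥ 1, and let I be a radical homogeneous ideal of A := k[x₀, …, xₙ] such that the Krull dimension of A/I is at least 2. Let Y := V₊(I) ⊆ ℙⁿ(k) and Z_Y := {g ∈ GL_{n+1}(k) : Y ∩ gY ≠ ∅}. Then the core Z_Y° := ⋂_{g ∈ GL_{n+1}(k)} g·Z_Y·g⁻¹ contains every h ∈ GL_{n+1}(k) with rank(h − 1) ≤ 1. Equivalently: for all g, h ∈ GL_{n+1}(k) with rank(h − 1) ≤ 1, there exists v ∈ k^{n+1}, v ≠ 0, such that f(v) = 0 and f((g⁻¹hg)⁻¹·v) = 0 for every f ∈ I. -/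
/-!
Conjugation preserves `rank (h - 1) ≤ 1`, so `u = g⁻¹hg` fixes pointwise a hyperplane
`c ⬝ᵥ v = 0`, and a fixed vector of `u` is also fixed by `u⁻¹`. It therefore suffices that
the cone `V(I)` meets every hyperplane `ℓ = 0` outside the origin. If it did not, the
Nullstellensatz would put a power of the irrelevant ideal into `I + (ℓ)`; by a graded Nakayama
argument `k[x]/I` would then be a finite module over `k[t]`, with `t` acting as `ℓ`, and since an
integral extension does not raise the Krull dimension, `dim k[x]/I ≤ dim k[t] = 1`.
-/

theorem RingHom.IsIntegral.ringKrullDim_le {R S : Type*} [CommRing R] [CommRing S]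
    {f : R →+* S} (hf : f.IsIntegral) : ringKrullDim S ≤ ringKrullDim R := by
  let := f.toAlgebra
  refine Order.krullDim_le_of_strictMono (PrimeSpectrum.comap f) fun p q hpq => ?_
  obtain ⟨x, hxq, hxp⟩ := SetLike.exists_of_lt (show p.asIdeal < q.asIdeal from hpq)
  exact Ideal.comap_lt_comap_of_integral_mem_sdiff hpq.le ⟨hxq, hxp⟩ (hf x)

namespace Matrix

theorem exists_dotProduct_eq_zero_imp_mulVec_eq_zero_of_rank_le_one {m n K : Type*}
    [Fintype m] [Fintype n] [Field K] {E : Matrix m n K} (hE : E.rank ≤ 1) :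
    ∃ c : n → K, ∀ v, c ⬝ᵥ v = 0 → E *ᵥ v = 0 := by
  classical
  have hrow (i : m) : E i ∈ LinearMap.range Eᵀ.mulVecLin :=
    ⟨Pi.single i 1, by ext j; simp⟩
  obtain ⟨c, hc⟩ := finrank_le_one_iff.mp (E.rank_transpose ▸ hE : Eᵀ.rank ≤ 1)
  refine ⟨c, fun v hv => funext fun i => ?_⟩
  obtain ⟨a, ha⟩ := hc ⟨E i, hrow i⟩
  have hEi : E i = a • (c : n → K) := (congrArg Subtype.val ha).symm
  change E i ⬝ᵥ v = 0
  rw [hEi, smul_dotProduct, hv, smul_zero]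

theorem rank_conj_sub_one_le {n K : Type*} [Fintype n] [DecidableEq n] [Field K]
    (g h : GL n K) :
    (((g⁻¹ * h * g : GL n K) : Matrix n n K) - 1).rank ≤ ((h : Matrix n n K) - 1).rank := by
  have hconj : ((g⁻¹ * h * g : GL n K) : Matrix n n K) - 1 =
      ((g⁻¹ : GL n K) : Matrix n n K) * (h - 1) * g := by
    simp [mul_sub, sub_mul]
  rw [hconj]
  exact (rank_mul_le_left _ _).trans (rank_mul_le_right _ _)

end Matrix

namespace MvPolynomial

attribute [local instance] gradedAlgebra in
theorem homogeneousComponent_add_mul {σ R : Type*} [CommSemiring R] {ℓ : MvPolynomial σ R}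
    {e : ℕ} (hℓ : ℓ.IsHomogeneous e) (w : MvPolynomial σ R) (d : ℕ) :
    homogeneousComponent (e + d) (ℓ * w) = ℓ * homogeneousComponent d w := by
  have := DirectSum.coe_decompose_mul_of_left_mem_of_le (homogeneousSubmodule σ R) (b := w)
    ((mem_homogeneousSubmodule e ℓ).mpr hℓ) (Nat.le_add_right e d)
  rw [add_tsub_cancel_left] at this
  rw [← decomposition.decompose'_apply, ← decomposition.decompose'_apply]
  exact this

theorem IsHomogeneous.degree_eq_of_mem_support {σ R : Type*} [CommSemiring R]
    {φ : MvPolynomial σ R} {n : ℕ} (hφ : φ.IsHomogeneous n) {s : σ →₀ ℕ}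
    (hs : s ∈ φ.support) : s.degree = n := by
  rw [Finsupp.degree_eq_weight_one]
  exact hφ (mem_support_iff.mp hs)

open scoped Polynomial in
theorem finite_aeval_quotient_of_pow_idealOfVars_le {σ R : Type*} [CommRing R] [Finite σ]
    {I : Ideal (MvPolynomial σ R)} (hI : ∀ f ∈ I, ∀ m, homogeneousComponent m f ∈ I)
    {ℓ : MvPolynomial σ R} {e : ℕ} (hℓ : ℓ.IsHomogeneous e) (he : e ≠ 0) {D : ℕ}
    (hD : idealOfVars σ R ^ D ≤ I ⊔ Ideal.span {ℓ}) :
    (Polynomial.aeval (R := R) (Ideal.Quotient.mk I ℓ)).toRingHom.Finite := by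
  let := (Polynomial.aeval (R := R) (Ideal.Quotient.mk I ℓ)).toRingHom.toAlgebra
  let M : Submodule R[X] (MvPolynomial σ R ⧸ I) := Submodule.span _
    ((fun s => Ideal.Quotient.mk I (monomial s 1)) '' {s | s.degree < D + e})
  have hsmul (p : R[X]) (x : MvPolynomial σ R) :
      p • Ideal.Quotient.mk I x = Ideal.Quotient.mk I (Polynomial.aeval ℓ p * x) := by
    rw [Algebra.smul_def, map_mul]
    exact congrArg (· * _) (Polynomial.aeval_algHom_apply (Ideal.Quotient.mkₐ R I) ℓ p)
  have hmem (d : ℕ) :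
      ∀ f : MvPolynomial σ R, f.IsHomogeneous d → Ideal.Quotient.mk I f ∈ M := by
    induction d using Nat.strong_induction_on with
    | _ d ih =>
    intro f hf
    by_cases hd : d < D + e
    · rw [f.as_sum, map_sum]
      refine Submodule.sum_mem _ fun s hs => ?_
      have hmonomial : Ideal.Quotient.mk I (monomial s (coeff s f)) =
          Polynomial.C (coeff s f) • Ideal.Quotient.mk I (monomial s 1) := by
        rw [hsmul, Polynomial.aeval_C, algebraMap_eq, C_mul_monomial, mul_one]
      rw [hmonomial]
      exact Submodule.smul_mem _ _
        (Submodule.subset_span ⟨s, (hf.degree_eq_of_mem_support hs).trans_lt hd, rfl⟩)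
    -- In high degree `f ≡ ℓ * w (mod I)` with `w` homogeneous of degree `d - e`.
    · obtain ⟨d, rfl⟩ : ∃ d', d = e + d' := ⟨d - e, by omega⟩
      have hfJ : f ∈ I ⊔ Ideal.span {ℓ} := hD <| (mem_pow_idealOfVars_iff _ _).mpr
        fun s hs => (hf.degree_eq_of_mem_support hs).ge.trans' (by omega)
      obtain ⟨a, ha, b, hb, rfl⟩ := Submodule.mem_sup.mp hfJ
      obtain ⟨w, rfl⟩ := Ideal.mem_span_singleton'.mp hb
      rw [← homogeneousComponent_eq_self hf, map_add, mul_comm, homogeneousComponent_add_mul hℓ,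
        map_add, Ideal.Quotient.eq_zero_iff_mem.mpr (hI a ha _), zero_add,
        ← Polynomial.aeval_X (R := R) ℓ, ← hsmul]
      exact Submodule.smul_mem _ _ (ih d (by omega) _ (homogeneousComponent_isHomogeneous d w))
  have hM : M = ⊤ := eq_top_iff.mpr fun x _ => by
    obtain ⟨f, rfl⟩ := Ideal.Quotient.mk_surjective x
    rw [← sum_homogeneousComponent f, map_sum]
    exact Submodule.sum_mem _ fun d _ => hmem d _ (homogeneousComponent_isHomogeneous d f)
  exact ⟨hM ▸ Submodule.fg_span ((Finsupp.finite_of_degree_lt _).image _)⟩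

theorem exists_ne_zero_eval_eq_zero_of_two_le_ringKrullDim {σ k : Type*} [Field k]
    [IsAlgClosed k] [Finite σ] {I : Ideal (MvPolynomial σ k)}
    (hI : ∀ f ∈ I, ∀ m, homogeneousComponent m f ∈ I)
    (hdim : 2 ≤ ringKrullDim (MvPolynomial σ k ⧸ I)) {ℓ : MvPolynomial σ k} {e : ℕ}
    (hℓ : ℓ.IsHomogeneous e) (he : e ≠ 0) :
    ∃ v : σ → k, v ≠ 0 ∧ (∀ f ∈ I, eval v f = 0) ∧ eval v ℓ = 0 := by
  by_contra! h
  have hvars : idealOfVars σ k ≤ (I ⊔ Ideal.span {ℓ}).radical := by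
    rw [← vanishingIdeal_zeroLocus_eq_radical (K := k), Ideal.span_le]
    rintro _ ⟨i, rfl⟩ v hv
    by_contra hvi
    refine h v (fun hv0 => hvi ?_) (fun f hf => hv f (Ideal.mem_sup_left hf))
      (hv ℓ (Ideal.mem_sup_right (Ideal.mem_span_singleton_self ℓ)))
    simp [hv0]
  obtain ⟨D, hD⟩ := Ideal.exists_pow_le_of_le_radical_of_fg hvars (idealOfVars_fg σ k)
  have hdim_le :=
    (finite_aeval_quotient_of_pow_idealOfVars_le hI hℓ he hD).to_isIntegral.ringKrullDim_le
  rw [IsPrincipalIdealRing.ringKrullDim_eq_one _ (Polynomial.not_isField k)] at hdim_le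
  exact absurd (hdim.trans hdim_le) (by norm_num)

end MvPolynomial

theorem stmt_7_general {k : Type*} [Field k] [IsAlgClosed k] (n : ℕ)
    (I : Ideal (MvPolynomial (Fin (n + 1)) k))
    (hhom : ∀ f ∈ I, ∀ m : ℕ, MvPolynomial.homogeneousComponent m f ∈ I)
    (hdim : 2 ≤ ringKrullDim (MvPolynomial (Fin (n + 1)) k ⧸ I))
    (g h : Matrix.GeneralLinearGroup (Fin (n + 1)) k)
    (hrk : ((h : Matrix (Fin (n + 1)) (Fin (n + 1)) k) - 1).rank ≤ 1) :
    ∃ v : Fin (n + 1) → k, v ≠ 0 ∧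
      (∀ f ∈ I, MvPolynomial.eval v f = 0) ∧
      (∀ f ∈ I, MvPolynomial.eval
        ((((g⁻¹ * h * g)⁻¹ : Matrix.GeneralLinearGroup (Fin (n + 1)) k) :
          Matrix (Fin (n + 1)) (Fin (n + 1)) k).mulVec v) f = 0) := by
  set u := g⁻¹ * h * g
  obtain ⟨c, hc⟩ := Matrix.exists_dotProduct_eq_zero_imp_mulVec_eq_zero_of_rank_le_one
    ((Matrix.rank_conj_sub_one_le g h).trans hrk)
  obtain ⟨v, hv0, hvI, hvc⟩ :=
    MvPolynomial.exists_ne_zero_eval_eq_zero_of_two_le_ringKrullDim hhom hdim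
      (.sum _ _ _ fun i _ => MvPolynomial.isHomogeneous_C_mul_X (c i) i) one_ne_zero
  have hfix : (u : Matrix _ _ k).mulVec v = v := by
    have := hc v (by simpa [dotProduct] using hvc)
    rwa [Matrix.sub_mulVec, Matrix.one_mulVec, sub_eq_zero] at this
  have hfix_inv : ((u⁻¹ : GL _ k) : Matrix _ _ k).mulVec v = v := by
    rw [← congrArg (Matrix.mulVec _) hfix, Matrix.mulVec_mulVec, Units.inv_mul, Matrix.one_mulVec]
  exact ⟨v, hv0, hvI, by rwa [hfix_inv]⟩

/-- If `Y = V₊(I) ⊆ ℙⁿ(k)` has dimension ≥ 1 then the core `Z_Y° = ⋂_g g·Z_Y·g⁻¹` of the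
intersection obstruction contains every `h` with `rank(h − 1) ≤ 1`: for all `g`,
`Y ∩ (g⁻¹hg)Y ≠ ∅`. -/
theorem stmt_7 {k : Type*} [Field k] [IsAlgClosed k] (n : ℕ) (hn : 1 ≤ n)
    (I : Ideal (MvPolynomial (Fin (n + 1)) k))
    (hrad : I.IsRadical)
    (hhom : ∀ f ∈ I, ∀ m : ℕ, MvPolynomial.homogeneousComponent m f ∈ I)
    (hdim : 2 ≤ ringKrullDim (MvPolynomial (Fin (n + 1)) k ⧸ I))
    (g h : Matrix.GeneralLinearGroup (Fin (n + 1)) k)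
    (hrk : ((h : Matrix (Fin (n + 1)) (Fin (n + 1)) k) - 1).rank ≤ 1) :
    ∃ v : Fin (n + 1) → k, v ≠ 0 ∧
      (∀ f ∈ I, MvPolynomial.eval v f = 0) ∧
      (∀ f ∈ I, MvPolynomial.eval
        ((((g⁻¹ * h * g)⁻¹ : Matrix.GeneralLinearGroup (Fin (n + 1)) k) :
          Matrix (Fin (n + 1)) (Fin (n + 1)) k).mulVec v) f = 0) :=
  stmt_7_general n I hhom hdim g h hrk
end

section
/- Let L be a field, let k be an algebraic field extension of L, let K be a field extension of k, and let A be a commutative L-algebra such that A ⊗_L k is an integral domain. If x : A → K is an injective L-algebra homomorphism, then the induced k-algebra homomorphism x̄ : A ⊗_L k → K, determined by x̄(a ⊗ λ) = λ·x(a), is also injective. -/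
open scoped TensorProduct

attribute [local instance] Algebra.TensorProduct.rightAlgebra

/-- If `k/L` is an algebraic field extension, `A` is a commutative `L`-algebra with
`A ⊗_L k` a domain, and `x : A → K` is an injective `L`-algebra homomorphism into a field
extension `K` of `k`, then the induced `k`-algebra homomorphism `A ⊗_L k → K`,
`a ⊗ λ ↦ λ·x(a)`, is injective. -/
theorem stmt_11 {L k K A : Type*} [Field L] [Field k] [Field K]
    [Algebra L k] [Algebra.IsAlgebraic L k]
    [Algebra k K] [Algebra L K] [IsScalarTower L k K]
    [CommRing A] [Algebra L A]
    [IsDomain (A ⊗[L] k)]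
    (x : A →ₐ[L] K) (hx : Function.Injective x)
    (xbar : (A ⊗[L] k) →ₐ[k] K)
    (hxbar : ∀ (a : A) (lam : k), xbar (a ⊗ₜ[L] lam) = algebraMap k K lam * x a) :
    Function.Injective xbar := by
  have hA : Nontrivial A := by
    rcases subsingleton_or_nontrivial A with h | h
    · exfalso
      have h1 : (1 : A ⊗[L] k) = (1 : A) ⊗ₜ[L] (1 : k) := rfl
      have h0 : (1 : A) = 0 := Subsingleton.elim _ _
      rw [h0, TensorProduct.zero_tmul] at h1
      exact one_ne_zero h1
    · exact h
  haveI : Algebra.IsIntegral A (A ⊗[L] k) := ⟨fun z => by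
    induction z using TensorProduct.induction_on with
    | zero => exact isIntegral_zero
    | tmul a b => exact IsIntegral.tmul a (Algebra.IsIntegral.isIntegral b)
    | add u v hu hv => exact hu.add hv⟩
  have hcomap : (RingHom.ker xbar.toRingHom).comap (algebraMap A (A ⊗[L] k)) = ⊥ := by
    ext a
    simp only [Ideal.mem_comap, RingHom.mem_ker, Ideal.mem_bot]
    have : algebraMap A (A ⊗[L] k) a = a ⊗ₜ[L] (1 : k) := rfl
    rw [AlgHom.toRingHom_eq_coe, RingHom.coe_coe, this, hxbar, map_one, one_mul]
    constructor
    · intro h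
      exact hx (by simpa using h)
    · rintro rfl; simp
  have hker : RingHom.ker xbar.toRingHom = ⊥ :=
    Ideal.eq_bot_of_comap_eq_bot hcomap
  exact (RingHom.injective_iff_ker_eq_bot xbar.toRingHom).mpr hker
end

section
/- Let L be a field, k an algebraic closure of L, and K a field extension of k. Let A be a commutative Hopf algebra over L such that A ⊗_L k is an integral domain. For a commutative L-algebra R, let G(R) denote the group of L-algebra homomorphisms A → R under the convolution product (u * v)(f) := m_R((u ⊗ v)(Δ(f))), with inverse u ↦ u ∘ S, where Δ and S are the comultiplication and antipode of A and m_R is multiplication in R. Let J be a subset of A ⊗_L k, let h ∈ G(L), and let x ∈ G(K) be injective; write h_K ∈ G(K) and h_k ∈ G(k) for the composites of h with the inclusions L → K and L → k. Suppose that the unique k-algebra homomorphism A ⊗_L k → K extending the point x⁻¹ * h_K * x ∈ G(K) vanishes on every element of J. Then for every g ∈ G(k), the unique k-algebra homomorphism A ⊗_L k → k extending g⁻¹ * h_k * g ∈ G(k) vanishes on every element of J. -/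
open scoped TensorProduct

attribute [local instance] Algebra.TensorProduct.rightAlgebra

/-- The convolution product of two points `u v : A → R` of the affine group scheme with
commutative Hopf algebra `A`: `(u * v)(f) = m_R ((u ⊗ v) (Δ f))`. -/
noncomputable def convPt {L A R : Type*} [CommSemiring L]
    [AddCommMonoid A] [Module L A] [CoalgebraStruct L A]
    [Semiring R] [Algebra L R]
    (u v : A →ₗ[L] R) : A →ₗ[L] R :=
  LinearMap.mul' L R ∘ₗ TensorProduct.map u v ∘ₗ CoalgebraStruct.comul

/-- Algebra homomorphisms commute with multiplication maps of tensor squares. -/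
theorem mulAux {L R S : Type*} [CommSemiring L] [CommSemiring R] [Algebra L R]
    [CommSemiring S] [Algebra L S] (u : R →ₐ[L] S) (z : R ⊗[L] R) :
    u (LinearMap.mul' L R z) =
      LinearMap.mul' L S (TensorProduct.map u.toLinearMap u.toLinearMap z) := by
  induction z using TensorProduct.induction_on with
  | zero => simp
  | tmul a b => simp
  | add a b ha hb => simp [map_add, ha, hb]

/-- Naturality of the convolution product. -/
theorem convPt_comp {L A R S : Type*} [CommSemiring L]
    [AddCommMonoid A] [Module L A] [CoalgebraStruct L A]
    [CommSemiring R] [Algebra L R] [CommSemiring S] [Algebra L S]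
    (u : R →ₐ[L] S) (p q : A →ₗ[L] R) :
    u.toLinearMap ∘ₗ convPt p q = convPt (u.toLinearMap ∘ₗ p) (u.toLinearMap ∘ₗ q) := by
  ext a
  simp only [LinearMap.comp_apply, convPt, AlgHom.toLinearMap_apply]
  rw [mulAux, TensorProduct.map_comp, LinearMap.comp_apply]

/-- Composing a conjugated point with an algebra homomorphism. -/
theorem convPt_conj_comp {L A R : Type*} [CommSemiring L] [CommRing A] [HopfAlgebra L A]
    [CommRing R] [Algebra L R] (h : A →ₐ[L] L) (u : A →ₐ[L] R) :
    u.toLinearMap ∘ₗ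
      (convPt (convPt (HopfAlgebra.antipode (R := L) (A := A))
        (Algebra.linearMap L A ∘ₗ h.toLinearMap)) LinearMap.id) =
      convPt (convPt (u.toLinearMap ∘ₗ (HopfAlgebra.antipode (R := L) (A := A)))
        (Algebra.linearMap L R ∘ₗ h.toLinearMap)) u.toLinearMap := by
  rw [convPt_comp, convPt_comp]
  have e1 : u.toLinearMap ∘ₗ (Algebra.linearMap L A ∘ₗ h.toLinearMap) =
      Algebra.linearMap L R ∘ₗ h.toLinearMap := by ext a; simp
  have e2 : u.toLinearMap ∘ₗ (LinearMap.id : A →ₗ[L] A) = u.toLinearMap := by ext a; simp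
  rw [e1, e2]

/-- If `h ∈ G(L)` and `x ∈ G(K)` is a generic point (i.e. injective as a homomorphism
`A → K`), and the extension of `x⁻¹ * h_K * x` to `A ⊗_L k` kills every element of `J`,
then for every `g ∈ G(k)` the extension of `g⁻¹ * h_k * g` to `A ⊗_L k` also kills every
element of `J`.  Group operations on points are convolution products, with inverse given by
precomposition with the antipode. -/
theorem stmt_12 {L k K A : Type*} [Field L] [Field k] [Field K]
    [Algebra L k] [IsAlgClosure L k]
    [Algebra k K] [Algebra L K] [IsScalarTower L k K]
    [CommRing A] [HopfAlgebra L A]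
    [IsDomain (A ⊗[L] k)]
    (J : Set (A ⊗[L] k))
    (h : A →ₐ[L] L) (x : A →ₐ[L] K) (hx : Function.Injective x)
    (xbar : (A ⊗[L] k) →ₐ[k] K)
    (hxbar : ∀ (a : A) (lam : k), xbar (a ⊗ₜ[L] lam) =
      algebraMap k K lam *
        convPt (convPt (x.toLinearMap ∘ₗ (HopfAlgebra.antipode (R := L) (A := A)))
          (Algebra.linearMap L K ∘ₗ h.toLinearMap)) x.toLinearMap a)
    (hJ : ∀ f ∈ J, xbar f = 0) :
    ∀ (g : A →ₐ[L] k) (gbar : (A ⊗[L] k) →ₐ[k] k),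
      (∀ (a : A) (lam : k), gbar (a ⊗ₜ[L] lam) =
        lam * convPt (convPt (g.toLinearMap ∘ₗ (HopfAlgebra.antipode (R := L) (A := A)))
          (Algebra.linearMap L k ∘ₗ h.toLinearMap)) g.toLinearMap a) →
      ∀ f ∈ J, gbar f = 0 := by
  intro g gbar hgbar f hf
  -- the "conjugation by h" map on A, as a linear map
  set c : A →ₗ[L] A :=
    convPt (convPt (HopfAlgebra.antipode (R := L) (A := A))
      (Algebra.linearMap L A ∘ₗ h.toLinearMap)) LinearMap.id with hc
  -- the extensions of the points x, g to the tensor product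
  set xt : (A ⊗[L] k) →ₐ[L] K :=
    Algebra.TensorProduct.productMap x (IsScalarTower.toAlgHom L k K) with hxt
  set gt : (A ⊗[L] k) →ₐ[L] k :=
    Algebra.TensorProduct.productMap g (AlgHom.id L k) with hgt
  -- xbar = xt ∘ (c ⊗ id), gbar = gt ∘ (c ⊗ id)
  have hxc : ∀ z : A ⊗[L] k, xbar z = xt (c.rTensor k z) := by
    intro z
    induction z using TensorProduct.induction_on with
    | zero => simp
    | tmul a lam =>
      rw [hxbar, LinearMap.rTensor_tmul, hxt,
        Algebra.TensorProduct.productMap_apply_tmul]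
      have := DFunLike.congr_fun (hc ▸ convPt_conj_comp h x : x.toLinearMap ∘ₗ c = _) a
      simp only [LinearMap.comp_apply, AlgHom.toLinearMap_apply] at this
      rw [← this, mul_comm]
      rfl
    | add a b ha hb => simp [map_add, ha, hb]
  have hgc : ∀ z : A ⊗[L] k, gbar z = gt (c.rTensor k z) := by
    intro z
    induction z using TensorProduct.induction_on with
    | zero => simp
    | tmul a lam =>
      rw [hgbar, LinearMap.rTensor_tmul, hgt,
        Algebra.TensorProduct.productMap_apply_tmul]
      have := DFunLike.congr_fun (hc ▸ convPt_conj_comp h g : g.toLinearMap ∘ₗ c = _) a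
      simp only [LinearMap.comp_apply, AlgHom.toLinearMap_apply] at this
      rw [← this, mul_comm]
      rfl
    | add a b ha hb => simp [map_add, ha, hb]
  -- A ⊗[L] k is integral over A
  have hANT : Nontrivial A := by
    constructor
    refine ⟨1, 0, fun h10 => ?_⟩
    have : (1 : A ⊗[L] k) = 0 := by
      rw [← map_one (algebraMap A (A ⊗[L] k)), h10, map_zero]
    exact one_ne_zero this
  have hint : Algebra.IsIntegral A (A ⊗[L] k) := by
    constructor
    intro z
    induction z using TensorProduct.induction_on with
    | zero => exact isIntegral_zero
    | tmul a lam =>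
      have h1 : IsIntegral A ((a : A) ⊗ₜ[L] (1 : k)) := by
        have : (a : A) ⊗ₜ[L] (1 : k) = algebraMap A (A ⊗[L] k) a := rfl
        rw [this]; exact isIntegral_algebraMap
      have h2 : IsIntegral A ((1 : A) ⊗ₜ[L] lam) := by
        have halg : Algebra.IsAlgebraic L k := IsAlgClosure.isAlgebraic
        have hlam : IsIntegral L lam :=
          (Algebra.IsAlgebraic.isAlgebraic (R := L) lam).isIntegral
        have : IsIntegral L ((1 : A) ⊗ₜ[L] lam) := by
          have := hlam.map (Algebra.TensorProduct.includeRight : k →ₐ[L] A ⊗[L] k)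
          simpa using this
        exact this.tower_top
      have : (a : A) ⊗ₜ[L] lam = ((a : A) ⊗ₜ[L] (1 : k)) * ((1 : A) ⊗ₜ[L] lam) := by
        rw [Algebra.TensorProduct.tmul_mul_tmul, mul_one, one_mul]
      rw [this]
      exact h1.mul h2
    | add a b ha hb => exact ha.add hb
  -- the kernel of xt is trivial
  have hker : ∀ z : A ⊗[L] k, xt z = 0 → z = 0 := by
    intro z hz
    have hprime : (RingHom.ker xt.toRingHom).IsPrime := RingHom.ker_isPrime _
    have hcomap : (RingHom.ker xt.toRingHom).comap (algebraMap A (A ⊗[L] k)) = ⊥ := by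
      refine (Submodule.eq_bot_iff _).2 fun a ha => ?_
      have hxa : xt (algebraMap A (A ⊗[L] k) a) = 0 := ha
      have : xt ((a : A) ⊗ₜ[L] (1 : k)) = 0 := hxa
      rw [hxt, Algebra.TensorProduct.productMap_apply_tmul, map_one, mul_one] at this
      exact hx (by rw [this, map_zero])
    have := Ideal.eq_bot_of_comap_eq_bot (S := A ⊗[L] k) hcomap
    have hzmem : z ∈ RingHom.ker xt.toRingHom := hz
    rw [this] at hzmem
    exact hzmem
  -- conclude
  have h1 : xt (c.rTensor k f) = 0 := by rw [← hxc]; exact hJ f hf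
  have h2 : c.rTensor k f = 0 := hker _ h1
  rw [hgc, h2, map_zero]
end

section
/- Let L be a field of characteristic zero, let k be an algebraic closure of L, and let D be a division ring equipped with an L-algebra structure such that there is a k-algebra isomorphism e : D ⊗_L k ≅ M₄(k) (so D is a central division algebra of degree 4 over L). Then for every nonzero d ∈ D, the following are equivalent: (i) there exists μ ∈ k ∖ {0} such that rank(e(d ⊗ 1) − μ·1) ≤ 1, where 1 is the 4×4 identity matrix; (ii) d = λ·1_D for some λ ∈ L ∖ {0}. In other words, regarding D^× as a subgroup of GL₄(k) via d ↦ e(d ⊗ 1), one has ({g ∈ GL₄(k) : rank(g − 1) ≤ 1}·k^×) ∩ D^× = L^×. -/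
/-!
Write `A = e (d ⊗ 1)` and `N = A - μ`. A matrix of rank at most one satisfies
`N ^ 2 = tr N • N`, so `A` is a root of `q = (X - μ) (X - μ - tr N)`. Powers of `d` that are
`L`-independent stay `k`-independent after base change, so the minimal polynomial `m` of `d` over
`L` is also that of `d ⊗ 1` over `k`, hence `m ∣ q`. If `d ∉ L` then `m = q`. The coefficient of
`X` in `q`, namely `-2μ - tr N`, then lies in `L`, and so does `tr A = 4μ + tr N`, because
`4 tr A` is the `L`-trace of left multiplication by `d` on `D`. Hence `μ ∈ L` is a root of the
irreducible quadratic `m`, a contradiction.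
-/

open scoped TensorProduct
open Polynomial

attribute [local instance] Algebra.TensorProduct.rightAlgebra

namespace Matrix

variable {k m n : Type*} [Field k] [Fintype n]

theorem exists_eq_vecMulVec_of_rank_le_one_s13 [Fintype m] {N : Matrix m n k} (h : N.rank ≤ 1) :
    ∃ u : m → k, ∃ v : n → k, N = vecMulVec u v := by
  have hle : Module.finrank k (Submodule.span k (Set.range Nᵀ)) ≤ 1 :=
    (rank_eq_finrank_span_cols N).symm.trans_le h
  obtain ⟨u, hu⟩ := (Submodule.finrank_le_one_iff_isPrincipal _).mp hle
  have hcol : ∀ j, ∃ c : k, c • u = Nᵀ j := fun j => by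
    rw [← Submodule.mem_span_singleton, ← hu]
    exact Submodule.subset_span ⟨j, rfl⟩
  choose v hv using hcol
  exact ⟨u, v, by ext i j; simpa [vecMulVec_apply, mul_comm] using (congrFun (hv j) i).symm⟩

theorem mul_self_eq_trace_smul_of_rank_le_one {N : Matrix n n k} (h : N.rank ≤ 1) :
    N * N = N.trace • N := by
  obtain ⟨u, v, rfl⟩ := exists_eq_vecMulVec_of_rank_le_one_s13 h
  rw [vecMulVec_mul_vecMulVec, vecMulVec_smul, trace_vecMulVec, dotProduct_comm]

theorem stdBasis_repr_apply [Fintype m] (A : Matrix m n k) (p : m × n) :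
    (stdBasis k m n).repr A p = A p.1 p.2 := by
  simp [stdBasis, Module.Basis.repr_reindex]

theorem trace_mulLeft [DecidableEq n] (A : Matrix n n k) :
    LinearMap.trace k _ (LinearMap.mulLeft k A) = Fintype.card n * A.trace := by
  rw [LinearMap.trace_eq_matrix_trace k (stdBasis k n n), trace, Fintype.sum_prod_type]
  simp only [diag_apply, LinearMap.toMatrix_apply, LinearMap.mulLeft_apply, stdBasis_eq_single,
    stdBasis_repr_apply]
  simp [trace, Finset.mul_sum]

theorem aeval_eq_zero_of_rank_sub_smul_le_one [DecidableEq n] {A : Matrix n n k} {μ : k}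
    (h : (A - μ • 1).rank ≤ 1) :
    aeval A ((X - C μ) * (X - C (μ + (A - μ • 1).trace))) = 0 := by
  have hsq := mul_self_eq_trace_smul_of_rank_le_one h
  simp only [map_mul, map_sub, aeval_X, aeval_C, map_add, Algebra.algebraMap_eq_smul_one]
  rw [← sub_sub, mul_sub, hsq, mul_smul_comm, mul_one, sub_self]

end Matrix

theorem AlgEquiv.trace_mulLeft {R A B : Type*} [CommRing R] [Ring A] [Ring B] [Algebra R A]
    [Algebra R B] (f : A ≃ₐ[R] B) (x : A) :
    LinearMap.trace R B (LinearMap.mulLeft R (f x)) =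
      LinearMap.trace R A (LinearMap.mulLeft R x) := by
  rw [← LinearMap.trace_conj' _ f.toLinearEquiv]
  congr
  ext
  simp

section BaseChange

variable {L k D : Type*} [Field L] [Field k] [Algebra L k] [Ring D] [Algebra L D]

theorem eq_zero_of_aeval_one_tmul_eq_zero {d : D} {P : k[X]}
    (hP : aeval (1 ⊗ₜ[L] d : k ⊗[L] D) P = 0) (hdeg : P.natDegree < (minpoly L d).natDegree) :
    P = 0 := by
  have hind := Module.Flat.linearIndependent_one_tmul (S := k) (linearIndependent_pow (K := L) d)
  rw [aeval_eq_sum_range' hdeg, ← Fin.sum_univ_eq_sum_range] at hP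
  have hc := Fintype.linearIndependent_iff.mp hind (fun i => P.coeff i)
    (by simpa [Algebra.TensorProduct.tmul_pow] using hP)
  ext i
  rcases lt_or_ge i (minpoly L d).natDegree with hi | hi
  · exact hc ⟨i, hi⟩
  · exact coeff_eq_zero_of_natDegree_lt (hdeg.trans_le hi)

theorem minpoly_one_tmul {d : D} (hd : IsIntegral L d) :
    minpoly k (1 ⊗ₜ[L] d : k ⊗[L] D) = (minpoly L d).map (algebraMap L k) := by
  refine (minpoly.unique _ _ ((minpoly.monic hd).map _) ?_ fun q hq hq0 => ?_).symm
  · rw [aeval_map_algebraMap, ← Algebra.TensorProduct.includeRight_apply, aeval_algHom_apply,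
      minpoly.aeval, map_zero]
  · rw [degree_map, degree_eq_natDegree (minpoly.ne_zero hd), degree_eq_natDegree hq.ne_zero]
    exact_mod_cast not_lt.mp fun hlt => hq.ne_zero (eq_zero_of_aeval_one_tmul_eq_zero hq0 hlt)

theorem mulLeft_one_tmul (d : D) :
    LinearMap.mulLeft k (1 ⊗ₜ[L] d : k ⊗[L] D) = (LinearMap.mulLeft L d).baseChange k := by
  ext x
  simp

theorem trace_mulLeft_one_tmul [Module.Finite L D] (d : D) :
    LinearMap.trace k _ (LinearMap.mulLeft k (1 ⊗ₜ[L] d : k ⊗[L] D)) =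
      algebraMap L k (LinearMap.trace L D (LinearMap.mulLeft L d)) := by
  rw [mulLeft_one_tmul, LinearMap.trace_baseChange]

end BaseChange

theorem minpoly_map_dvd_of_rank_sub_smul_le_one {L k D n : Type*} [Field L] [Field k]
    [Algebra L k] [Ring D] [Algebra L D] [Fintype n] [DecidableEq n]
    (f : k ⊗[L] D ≃ₐ[k] Matrix n n k) {d : D} (hd : IsIntegral L d) {μ : k}
    (h : (f (1 ⊗ₜ d) - μ • 1).rank ≤ 1) :
    (minpoly L d).map (algebraMap L k) ∣
      (X - C μ) * (X - C (μ + (f (1 ⊗ₜ d) - μ • 1).trace)) := by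
  rw [← minpoly_one_tmul hd]
  refine minpoly.dvd k _ (f.injective ?_)
  rw [← aeval_algHom_apply, map_zero]
  exact Matrix.aeval_eq_zero_of_rank_sub_smul_le_one h

theorem mem_range_algebraMap_of_rank_sub_smul_le_one {L k D n : Type*} [Field L] [CharZero L]
    [Field k] [Algebra L k] [DivisionRing D] [Algebra L D] [Fintype n] [DecidableEq n]
    (f : k ⊗[L] D ≃ₐ[k] Matrix n n k) (hn : 2 < Fintype.card n) {d : D} {μ : k}
    (h : (f (1 ⊗ₜ d) - μ • 1).rank ≤ 1) : d ∈ (algebraMap L D).range := by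
  have : Module.Finite k (k ⊗[L] D) := Module.Finite.equiv f.symm.toLinearEquiv
  have : Module.Finite L D := Module.Finite.of_finite_tensorProduct_of_faithfullyFlat k
  have hd : IsIntegral L d := .of_finite L d
  refine minpoly.natDegree_eq_one_iff.mp ?_
  by_contra hne
  set t := (f (1 ⊗ₜ d) - μ • 1).trace
  have hmq : (minpoly L d).map (algebraMap L k) = (X - C μ) * (X - C (μ + t)) := by
    refine (eq_of_monic_of_dvd_of_natDegree_le ((minpoly.monic hd).map _)
      ((monic_X_sub_C _).mul (monic_X_sub_C _)) (minpoly_map_dvd_of_rank_sub_smul_le_one f hd h)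
      ?_).symm
    rw [natDegree_map, natDegree_mul (X_sub_C_ne_zero _) (X_sub_C_ne_zero _), natDegree_X_sub_C,
      natDegree_X_sub_C]
    have := minpoly.natDegree_pos hd
    omega
  have hcoeff : algebraMap L k (minpoly L d).nextCoeff = -μ + -(μ + t) := by
    rw [← nextCoeff_map (algebraMap L k).injective, hmq,
      (monic_X_sub_C _).nextCoeff_mul (monic_X_sub_C _), nextCoeff_X_sub_C, nextCoeff_X_sub_C]
  have htrace : (Fintype.card n : k) * (Fintype.card n * μ + t) =
      algebraMap L k (LinearMap.trace L D (LinearMap.mulLeft L d)) := by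
    rw [← trace_mulLeft_one_tmul, ← f.trace_mulLeft, Matrix.trace_mulLeft]
    simp only [t, Matrix.trace_sub, Matrix.trace_smul, Matrix.trace_one, smul_eq_mul]
    ring
  -- `n (n μ + t) + n (-2μ - t) = n (n - 2) μ`
  set c : L := (LinearMap.trace L D (LinearMap.mulLeft L d) +
    Fintype.card n * (minpoly L d).nextCoeff) / (Fintype.card n * (Fintype.card n - 2))
  have hc : algebraMap L k c = μ := by
    have : CharZero k := charZero_of_injective_algebraMap (algebraMap L k).injective
    have hn0 : (Fintype.card n : k) ≠ 0 := Nat.cast_ne_zero.mpr (by omega)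
    have hn2 : (Fintype.card n : k) - 2 ≠ 0 := sub_ne_zero.mpr (by exact_mod_cast hn.ne')
    rw [map_div₀, map_add, map_mul, map_mul, map_sub, map_natCast, map_ofNat, hcoeff, ← htrace]
    field_simp
    ring
  have hroot : (minpoly L d).IsRoot c :=
    IsRoot.of_map (f := algebraMap L k) (by rw [hc, hmq]; simp) (algebraMap L k).injective
  exact hne (natDegree_eq_of_degree_eq_some
    (degree_eq_one_of_irreducible_of_root (minpoly.irreducible hd) hroot))

theorem stmt_13_general {L k D : Type*} [Field L] [CharZero L] [Field k]
    [Algebra L k]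
    [DivisionRing D] [Algebra L D]
    (e : (D ⊗[L] k) ≃ₐ[k] Matrix (Fin 4) (Fin 4) k)
    (d : D) (hd : d ≠ 0) :
    (∃ μ : k, μ ≠ 0 ∧ (e (d ⊗ₜ[L] 1) - μ • 1).rank ≤ 1) ↔
      ∃ lam : L, lam ≠ 0 ∧ d = algebraMap L D lam := by
  constructor
  · rintro ⟨μ, -, h⟩
    obtain ⟨lam, rfl⟩ := mem_range_algebraMap_of_rank_sub_smul_le_one
      ((Algebra.TensorProduct.commRight L k D).trans e) (by simp) h
    exact ⟨lam, by rintro rfl; simp at hd, rfl⟩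
  · rintro ⟨lam, hlam, rfl⟩
    refine ⟨algebraMap L k lam, by simpa using hlam, ?_⟩
    have : algebraMap L D lam ⊗ₜ[L] (1 : k) = algebraMap k (D ⊗[L] k) (algebraMap L k lam) := by
      rw [← IsScalarTower.algebraMap_apply L k (D ⊗[L] k)]
      rfl
    rw [this, AlgEquiv.commutes, Algebra.algebraMap_eq_smul_one, sub_self, Matrix.rank_zero]
    exact zero_le_one

/-- Let `D` be a division algebra of degree 4 over a characteristic-zero field `L`, with an
identification `e : D ⊗_L k ≅ M₄(k)` over the algebraic closure `k` of `L`.  Then a nonzero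
`d ∈ D` satisfies `rank(e(d ⊗ 1) − μ·1) ≤ 1` for some `μ ∈ k^×` if and only if `d` is a
nonzero scalar from `L`; that is, `({g : rank(g − 1) ≤ 1}·k^×) ∩ D^× = L^×`. -/
theorem stmt_13 {L k D : Type*} [Field L] [CharZero L] [Field k]
    [Algebra L k] [IsAlgClosure L k]
    [DivisionRing D] [Algebra L D]
    (e : (D ⊗[L] k) ≃ₐ[k] Matrix (Fin 4) (Fin 4) k)
    (d : D) (hd : d ≠ 0) :
    (∃ μ : k, μ ≠ 0 ∧ (e (d ⊗ₜ[L] 1) - μ • 1).rank ≤ 1) ↔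
      ∃ lam : L, lam ≠ 0 ∧ d = algebraMap L D lam :=
  stmt_13_general e d hd
end
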